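/- arXiv:2504.19491 — 5 statements merged into one kernel-verified Lean document; each statement's English description precedes it below -/
import Mathlib

section
/- Hardy probability vanishes in fully factorizable models: Suppose p_A(±1|x), p_B(±1|y), p_C(±1|z) are probability distributions for each setting (so p(+1|·)+p(-1|·)=1, values in [0,1]), and define p(a,b,c|x,y,z) = p_A(a|x)p_B(b|y)p_C(c|z). If p_A(+1|1)p_B(+1|0)=0, p_B(+1|1)p_C(+1|0)=0, p_A(+1|0)p_C(+1|1)=0, and p_A(-1|1)p_B(-1|1)p_C(-1|1)=0, then the Hardy probability p_A(+1|0)p_B(+1|0)p_C(+1|0)=0. -/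
/-- Outcome `true` ↔ +1, `false` ↔ -1; settings are `Fin 2`. -/
theorem hardy_zero_fully_local_general
    (pA pB pC : Bool → Fin 2 → ℝ)
    (hAn : ∀ x, pA true x + pA false x = 1)
    (hBn : ∀ y, pB true y + pB false y = 1)
    (hCn : ∀ z, pC true z + pC false z = 1)
    (h1 : pA true 1 * pB true 0 = 0)
    (h2 : pB true 1 * pC true 0 = 0)
    (h3 : pA true 0 * pC true 1 = 0)
    (h4 : pA false 1 * pB false 1 * pC false 1 = 0) :
    pA true 0 * pB true 0 * pC true 0 = 0 := by
  by_contra hHardy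
  obtain ⟨hAB, hC0⟩ := mul_ne_zero_iff.1 hHardy
  obtain ⟨hA0, hB0⟩ := mul_ne_zero_iff.1 hAB
  have eA : pA true 1 = 0 := (mul_eq_zero.1 h1).resolve_right hB0
  have eB : pB true 1 = 0 := (mul_eq_zero.1 h2).resolve_right hC0
  have eC : pC true 1 = 0 := (mul_eq_zero.1 h3).resolve_left hA0
  have fA : pA false 1 = 1 := by linarith [hAn 1]
  have fB : pB false 1 = 1 := by linarith [hBn 1]
  have fC : pC false 1 = 1 := by linarith [hCn 1]
  rw [fA, fB, fC] at h4
  norm_num at h4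

/-- Hardy probability vanishes in fully factorizable (fully local) models.
Outcome `true` ↔ +1, `false` ↔ -1; settings are `Fin 2`. -/
theorem hardy_zero_fully_local
    (pA pB pC : Bool → Fin 2 → ℝ)
    (hA : ∀ o x, pA o x ∈ Set.Icc (0:ℝ) 1)
    (hB : ∀ o x, pB o x ∈ Set.Icc (0:ℝ) 1)
    (hC : ∀ o x, pC o x ∈ Set.Icc (0:ℝ) 1)
    (hAn : ∀ x, pA true x + pA false x = 1)
    (hBn : ∀ y, pB true y + pB false y = 1)
    (hCn : ∀ z, pC true z + pC false z = 1)
    (h1 : pA true 1 * pB true 0 = 0)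
    (h2 : pB true 1 * pC true 0 = 0)
    (h3 : pA true 0 * pC true 1 = 0)
    (h4 : pA false 1 * pB false 1 * pC false 1 = 0) :
    pA true 0 * pB true 0 * pC true 0 = 0 :=
  hardy_zero_fully_local_general pA pB pC hAn hBn hCn h1 h2 h3 h4
end

section
/- Hardy probability vanishes even with a nonlocal Bob–Charlie pair: Let p_A(a|x) ∈ [0,1] with p_A(+1|x)+p_A(-1|x)=1, and let q(b,c|y,z) be a bipartite conditional distribution for Bob and Charlie (nonnegative, summing to 1 over b,c for each y,z). Define p(a,b,c|x,y,z)=p_A(a|x)·q(b,c|y,z). Suppose the Hardy constraints hold: p_A(+1|1)·q_B(+1|0)=0 (where q_B(+1|0)=Σ_c q(+1,c|0,z) is Bob's marginal, assumed independent of z), q(+1,+1|1,0)=0, p_A(+1|0)·q_C(+1|1)=0 (q_C the Charlie marginal, independent of y), and p_A(-1|1)·q(-1,-1|1,1)=0. Then the Hardy probability p_A(+1|0)·q(+1,+1|0,0)=0. -/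
open Finset

/-- Hardy probability vanishes even when Bob and Charlie share an arbitrary
no-signalling (possibly PR-box type) bipartite box, while Alice is factorized out. -/
theorem hardy_zero_nonlocal_BC_pair
    (pA : Bool → Fin 2 → ℝ) (q : Bool → Bool → Fin 2 → Fin 2 → ℝ)
    (qB qC : Bool → Fin 2 → ℝ)
    (hA : ∀ o x, pA o x ∈ Set.Icc (0:ℝ) 1)
    (hAn : ∀ x, pA true x + pA false x = 1)
    (hq : ∀ b c y z, 0 ≤ q b c y z)
    (hqn : ∀ y z, ∑ b, ∑ c, q b c y z = 1)
    -- no-signalling marginals of the Bob–Charlie box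
    (hqB : ∀ b y z, ∑ c, q b c y z = qB b y)
    (hqC : ∀ c y z, ∑ b, q b c y z = qC c z)
    -- Hardy zero constraints for p(a,b,c|x,y,z) = pA(a|x) · q(b,c|y,z)
    (h1 : pA true 1 * qB true 0 = 0)
    (h2 : q true true 1 0 = 0)
    (h3 : pA true 0 * qC true 1 = 0)
    (h4 : pA false 1 * q false false 1 1 = 0) :
    pA true 0 * q true true 0 0 = 0 := by
  rcases mul_eq_zero.mp h3 with hA0 | hC1
  · rw [hA0, zero_mul]
  · -- qC true 1 = 0 forces q b true y 1 = 0 for all b,y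
    have hsum11 : q true true 1 1 + q false true 1 1 = 0 := by
      have := hqC true 1 1; simp [Fintype.sum_bool] at this; linarith [this]
    have hqtt11 : q true true 1 1 = 0 :=
      le_antisymm (by linarith [hq false true 1 1]) (hq true true 1 1)
    have hqft11 : q false true 1 1 = 0 := by linarith
    rcases mul_eq_zero.mp h4 with hAf1 | hqff11
    · -- pA false 1 = 0 ⇒ pA true 1 = 1 ⇒ qB true 0 = 0
      have hpt1 : pA true 1 = 1 := by have := hAn 1; linarith
      have hB0 : qB true 0 = 0 := by
        rcases mul_eq_zero.mp h1 with h | h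
        · rw [hpt1] at h; norm_num at h
        · exact h
      have : q true true 0 0 + q true false 0 0 = 0 := by
        have := hqB true 0 0; simp [Fintype.sum_bool] at this; rw [hB0] at this
        linarith
      have : q true true 0 0 = 0 :=
        le_antisymm (by linarith [hq true false 0 0]) (hq true true 0 0)
      rw [this, mul_zero]
    · -- q false false 1 1 = 0, so qB false 1 = 0
      have hBf1 : qB false 1 = 0 := by
        have := hqB false 1 1; simp [Fintype.sum_bool] at this
        rw [hqft11, hqff11] at this; linarith
      -- qB false 1 via z = 0: q false true 1 0 + q false false 1 0 = 0
      have hsum10 : q false true 1 0 + q false false 1 0 = 0 := by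
        have := hqB false 1 0; simp [Fintype.sum_bool] at this
        rw [hBf1] at this; linarith
      have hqft10 : q false true 1 0 = 0 :=
        le_antisymm (by linarith [hq false false 1 0]) (hq false true 1 0)
      -- qC true 0 via y = 1: q true true 1 0 + q false true 1 0 = 0
      have hC0 : qC true 0 = 0 := by
        have := hqC true 1 0; simp [Fintype.sum_bool] at this
        rw [h2, hqft10] at this; linarith
      -- qC true 0 via y = 0
      have : q true true 0 0 + q false true 0 0 = 0 := by
        have := hqC true 0 0; simp [Fintype.sum_bool] at this
        rw [hC0] at this; linarith
      have : q true true 0 0 = 0 :=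
        le_antisymm (by linarith [hq false true 0 0]) (hq true true 0 0)
      rw [this, mul_zero]
end

section
/- Upper bound relating Hardy probability to the parameter r: For all r,s,t ∈ (0,1) with 1-s-t+rst ≥ 0 and t ≤ (1-s)/(1-rs), the Hardy function satisfies Ω(r,s,t) = r²(1-r)st(1-s-t+rst)/((1-rs)(1-rt)) ≤ r²(1-r) ≤ 4/27. -/
/-! Writing `1 - s - t + r s t = (1 - s)(1 - t) - (1 - r) s t`, the factor
`s t (1 - s - t + r s t) / ((1 - r s)(1 - r t))` of `Ω` is at most
`s t (1 - s)(1 - t) / ((1 - r s)(1 - r t)) ≤ 1`, so `Ω ≤ r²(1 - r)`; and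
`4/27 - r²(1 - r) = (r - 2/3)²(r + 1/3)`. -/

/-- The tripartite Hardy probability function. -/
noncomputable def hardyΩ (r s t : ℝ) : ℝ :=
  r ^ 2 * (1 - r) * s * t * (1 - s - t + r * s * t) / ((1 - r * s) * (1 - r * t))

lemma hardy_numerator_le_denominator {r s t : ℝ} (hr : r ≤ 1) (hs₀ : 0 ≤ s) (hs₁ : s ≤ 1)
    (ht₀ : 0 ≤ t) (ht₁ : t ≤ 1) :
    s * t * (1 - s - t + r * s * t) ≤ (1 - r * s) * (1 - r * t) := by
  have hprod : 0 ≤ (1 - s) * (1 - t) := mul_nonneg (by linarith) (by linarith)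
  calc s * t * (1 - s - t + r * s * t)
      = s * t * ((1 - s) * (1 - t)) - (1 - r) * (s * t) ^ 2 := by ring
    _ ≤ s * t * ((1 - s) * (1 - t)) := by
        have : 0 ≤ (1 - r) * (s * t) ^ 2 := mul_nonneg (by linarith) (sq_nonneg _)
        linarith
    _ ≤ (1 - s) * (1 - t) := mul_le_of_le_one_left hprod (mul_le_one₀ hs₁ ht₀ ht₁)
    _ ≤ (1 - r * s) * (1 - r * t) := by
        gcongr
        · nlinarith
        · nlinarith
        · nlinarith

lemma sq_mul_one_sub_le {r : ℝ} (hr : -(1 / 3) ≤ r) : r ^ 2 * (1 - r) ≤ 4 / 27 := by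
  have : 4 / 27 - r ^ 2 * (1 - r) = (r - 2 / 3) ^ 2 * (r + 1 / 3) := by ring
  nlinarith [mul_nonneg (sq_nonneg (r - 2 / 3)) (show 0 ≤ r + 1 / 3 by linarith)]

theorem hardyΩ_le_bound_general (r s t : ℝ)
    (hr : r ∈ Set.Ioo (0:ℝ) 1) (hs : s ∈ Set.Ioo (0:ℝ) 1) (ht : t ∈ Set.Ioo (0:ℝ) 1) :
    hardyΩ r s t ≤ r ^ 2 * (1 - r) ∧ r ^ 2 * (1 - r) ≤ 4 / 27 := by
  obtain ⟨hr₀, hr₁⟩ := hr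
  obtain ⟨hs₀, hs₁⟩ := hs
  obtain ⟨ht₀, ht₁⟩ := ht
  have hden : 0 < (1 - r * s) * (1 - r * t) := by
    apply mul_pos <;> nlinarith
  have hfactor : s * t * (1 - s - t + r * s * t) / ((1 - r * s) * (1 - r * t)) ≤ 1 :=
    div_le_one_of_le₀ (hardy_numerator_le_denominator hr₁.le hs₀.le hs₁.le ht₀.le ht₁.le)
      hden.le
  refine ⟨?_, sq_mul_one_sub_le (by linarith)⟩
  calc hardyΩ r s t
      = r ^ 2 * (1 - r) * (s * t * (1 - s - t + r * s * t) / ((1 - r * s) * (1 - r * t))) := by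
        unfold hardyΩ; ring
    _ ≤ r ^ 2 * (1 - r) := mul_le_of_le_one_right (by nlinarith) hfactor

/-- Upper bound relating the Hardy probability to the parameter r:
Ω(r,s,t) ≤ r²(1-r) ≤ 4/27. -/
theorem hardyΩ_le_bound (r s t : ℝ)
    (hr : r ∈ Set.Ioo (0:ℝ) 1) (hs : s ∈ Set.Ioo (0:ℝ) 1) (ht : t ∈ Set.Ioo (0:ℝ) 1)
    (hh : 0 ≤ 1 - s - t + r * s * t) (htle : t ≤ (1 - s) / (1 - r * s)) :
    hardyΩ r s t ≤ r ^ 2 * (1 - r) ∧ r ^ 2 * (1 - r) ≤ 4 / 27 :=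
  hardyΩ_le_bound_general r s t hr hs ht
end

section
/- Deterministic no-signalling models have zero Hardy probability: Let p(a,b,c|x,y,z) be a tripartite conditional distribution that is deterministic (every probability is 0 or 1) and satisfies the no-signalling conditions (all single-party and two-party marginals are independent of the remaining parties' settings). If p satisfies the four Hardy zero constraints p_{AB}(+1,+1|1,0)=0, p_{BC}(+1,+1|1,0)=0, p_{AC}(+1,+1|0,1)=0, p(-1,-1,-1|1,1,1)=0, then p(+1,+1,+1|0,0,0)=0. -/
open Finset

/-! A deterministic no-signalling box is local: at each setting it is a point mass, and since the
two-party marginals of a point mass are again point masses, no-signalling forces each party's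
outcome to depend on its own setting only. For local response functions `α β γ` the Hardy
constraints read `¬(α 1 ∧ β 0)`, `¬(β 1 ∧ γ 0)`, `¬(α 0 ∧ γ 1)` and `α 1 ∨ β 1 ∨ γ 1`, and
`α 0 ∧ β 0 ∧ γ 0` would force `α 1`, `β 1`, `γ 1` all false. -/

theorem exists_forall_eq_ite_of_sum_eq_one {Ω : Type*} [Fintype Ω] [DecidableEq Ω] {f : Ω → ℝ}
    (hdet : ∀ ω, f ω = 0 ∨ f ω = 1) (hsum : ∑ ω, f ω = 1) :
    ∃ ω₀, ∀ ω, f ω = if ω = ω₀ then 1 else 0 := by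
  obtain ⟨ω₀, -, hω₀⟩ := exists_ne_zero_of_sum_ne_zero (hsum ▸ one_ne_zero : ∑ ω, f ω ≠ 0)
  have hf₀ : f ω₀ = 1 := (hdet ω₀).resolve_left hω₀
  have hrest : ∑ ω ∈ univ.erase ω₀, f ω = 0 := by
    linarith [add_sum_erase univ f (mem_univ ω₀)]
  have hnonneg : ∀ ω, 0 ≤ f ω := fun ω => by rcases hdet ω with h | h <;> simp [h]
  refine ⟨ω₀, fun ω => ?_⟩
  split_ifs with h
  · rwa [h]
  · exact (sum_eq_zero_iff_of_nonneg fun ω _ => hnonneg ω).1 hrest ω (mem_erase.2 ⟨h, mem_univ ω⟩)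

theorem eq_and_eq_of_forall_ite_mul_ite_eq {A B : Type*} [DecidableEq A] [DecidableEq B]
    {a₁ a₂ : A} {b₁ b₂ : B}
    (h : ∀ a b, (if a = a₁ then (1 : ℝ) else 0) * (if b = b₁ then 1 else 0) =
      (if a = a₂ then 1 else 0) * (if b = b₂ then 1 else 0)) :
    a₁ = a₂ ∧ b₁ = b₂ := by
  by_contra hne
  have h₁ := h a₁ b₁
  rw [if_pos rfl, if_pos rfl, one_mul, ite_zero_mul_ite_zero, if_neg hne] at h₁
  exact one_ne_zero h₁

section NoSignalling

variable {A B C X Y Z : Type*} [Fintype A] [Fintype B] [Fintype C]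
  [DecidableEq A] [DecidableEq B] [DecidableEq C] {p : A → B → C → X → Y → Z → ℝ}

theorem exists_forall_eq_ite_mul_ite_mul_ite
    (hdet : ∀ a b c x y z, p a b c x y z = 0 ∨ p a b c x y z = 1)
    (hnorm : ∀ x y z, ∑ a, ∑ b, ∑ c, p a b c x y z = 1) :
    ∃ ω : X → Y → Z → A × B × C, ∀ a b c x y z, p a b c x y z =
      (if a = (ω x y z).1 then 1 else 0) * (if b = (ω x y z).2.1 then 1 else 0) *
        (if c = (ω x y z).2.2 then 1 else 0) := by
  choose ω hω using fun x y z =>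
    exists_forall_eq_ite_of_sum_eq_one (f := fun o : A × B × C => p o.1 o.2.1 o.2.2 x y z)
      (fun o => hdet _ _ _ x y z) (by simpa [Fintype.sum_prod_type] using hnorm x y z)
  refine ⟨ω, fun a b c x y z => ?_⟩
  simp only [ite_zero_mul_ite_zero, mul_one]
  exact (hω x y z (a, b, c)).trans (by simp [Prod.ext_iff, and_assoc])

theorem exists_local_of_deterministic_noSignalling [Nonempty X] [Nonempty Y] [Nonempty Z]
    (hdet : ∀ a b c x y z, p a b c x y z = 0 ∨ p a b c x y z = 1)
    (hnorm : ∀ x y z, ∑ a, ∑ b, ∑ c, p a b c x y z = 1)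
    (hNSz : ∀ a b x y z z', ∑ c, p a b c x y z = ∑ c, p a b c x y z')
    (hNSy : ∀ a c x y y' z, ∑ b, p a b c x y z = ∑ b, p a b c x y' z)
    (hNSx : ∀ b c x x' y z, ∑ a, p a b c x y z = ∑ a, p a b c x' y z) :
    ∃ (α : X → A) (β : Y → B) (γ : Z → C), ∀ a b c x y z, p a b c x y z =
      (if a = α x then 1 else 0) * (if b = β y then 1 else 0) * (if c = γ z then 1 else 0) := by
  obtain ⟨ω, hω⟩ := exists_forall_eq_ite_mul_ite_mul_ite hdet hnorm
  have hAB : ∀ x y z z', (ω x y z).1 = (ω x y z').1 ∧ (ω x y z).2.1 = (ω x y z').2.1 :=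
    fun x y z z' => eq_and_eq_of_forall_ite_mul_ite_eq fun a b => by
      simpa [hω, ← mul_sum] using hNSz a b x y z z'
  have hAC : ∀ x y y' z, (ω x y z).1 = (ω x y' z).1 ∧ (ω x y z).2.2 = (ω x y' z).2.2 :=
    fun x y y' z => eq_and_eq_of_forall_ite_mul_ite_eq fun a c => by
      simpa [hω, ← sum_mul, ← mul_sum] using hNSy a c x y y' z
  have hBC : ∀ x x' y z, (ω x y z).2.1 = (ω x' y z).2.1 ∧ (ω x y z).2.2 = (ω x' y z).2.2 :=
    fun x x' y z => eq_and_eq_of_forall_ite_mul_ite_eq fun b c => by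
      simpa [hω, ← sum_mul, mul_assoc] using hNSx b c x x' y z
  obtain ⟨x₀⟩ := ‹Nonempty X›
  obtain ⟨y₀⟩ := ‹Nonempty Y›
  obtain ⟨z₀⟩ := ‹Nonempty Z›
  refine ⟨fun x => (ω x y₀ z₀).1, fun y => (ω x₀ y z₀).2.1, fun z => (ω x₀ y₀ z).2.2,
    fun a b c x y z => ?_⟩
  rw [hω, (hAB x y z z₀).1, (hAC x y y₀ z₀).1, (hAB x y z z₀).2, (hBC x x₀ y z₀).1,
    (hAC x y y₀ z).2, (hBC x x₀ y₀ z).2]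

end NoSignalling

theorem hardy_local_deterministic {a₀ a₁ b₀ b₁ c₀ c₁ : Bool} (h₁ : ¬(a₁ ∧ b₀)) (h₂ : ¬(b₁ ∧ c₀))
    (h₃ : ¬(a₀ ∧ c₁)) (h₄ : a₁ ∨ b₁ ∨ c₁) : ¬(a₀ ∧ b₀ ∧ c₀) := by
  revert a₀ a₁ b₀ b₁ c₀ c₁; decide

/-- Deterministic no-signalling tripartite models satisfying the four Hardy zero
constraints have zero Hardy probability. -/
theorem hardy_zero_deterministic_no_signalling
    (p : Bool → Bool → Bool → Fin 2 → Fin 2 → Fin 2 → ℝ)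
    (hdet : ∀ a b c x y z, p a b c x y z = 0 ∨ p a b c x y z = 1)
    (hnorm : ∀ x y z, ∑ a, ∑ b, ∑ c, p a b c x y z = 1)
    -- no-signalling: two-party marginals are independent of the remaining setting
    (hNSz : ∀ a b x y z z', ∑ c, p a b c x y z = ∑ c, p a b c x y z')
    (hNSy : ∀ a c x y y' z, ∑ b, p a b c x y z = ∑ b, p a b c x y' z)
    (hNSx : ∀ b c x x' y z, ∑ a, p a b c x y z = ∑ a, p a b c x' y z)
    -- Hardy zero constraints
    (h1 : ∀ z, ∑ c, p true true c 1 0 z = 0)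
    (h2 : ∀ x, ∑ a, p a true true x 1 0 = 0)
    (h3 : ∀ y, ∑ b, p true b true 0 y 1 = 0)
    (h4 : p false false false 1 1 1 = 0) :
    p true true true 0 0 0 = 0 := by
  obtain ⟨α, β, γ, hp⟩ := exists_local_of_deterministic_noSignalling hdet hnorm hNSz hNSy hNSx
  have hAB : ¬(α 1 ∧ β 0) := by have h := h1 0; simp [hp] at h; grind
  have hBC : ¬(β 1 ∧ γ 0) := by have h := h2 0; simp [hp] at h; grind
  have hAC : ¬(α 0 ∧ γ 1) := by have h := h3 0; simp [hp] at h; grind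
  have hABC : α 1 ∨ β 1 ∨ γ 1 := by simp [hp] at h4; grind
  have hlocal := hardy_local_deterministic hAB hBC hAC hABC
  simp [hp]
  grind
end

section
/- Strictly positive Hardy probability is incompatible with any convex mixture of one-versus-two bipartitioned no-signalling models: Suppose p(a,b,c|x,y,z) = Σ_m [μ₁(m) p_A^m(a|x) q_{BC}^m(b,c|y,z) + μ₂(m) p_B^m(b|y) q_{AC}^m(a,c|x,z) + μ₃(m) p_C^m(c|z) q_{AB}^m(a,b|x,y)] where all component distributions are no-signalling bipartite distributions and single-party distributions, weights are nonnegative and sum to 1. If p satisfies the four Hardy zero constraints p_{AB}(+1,+1|1,0)=0, p_{BC}(+1,+1|1,0)=0, p_{AC}(+1,+1|0,1)=0, p(-1,-1,-1|1,1,1)=0, then p(+1,+1,+1|0,0,0)=0. -/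
/-!
Each term `μ p(a|x) q(b,c|y,z)` of the mixture is a nonnegative box, and every Hardy constraint
says that a sum of nonnegative probabilities vanishes, so the constraints pass to each term with
positive weight; it therefore suffices to rule out a Hardy paradox for a single product box.
The Hardy constraints are invariant under the cyclic relabelling `A → B → C → A`, so the
bipartitions `B|AC` and `C|AB` reduce to `A|BC`. For `p(a|x) q(b,c|y,z)` with `p(+|0) > 0` and
`q(+,+|0,0) > 0`: the `AC` constraint forces `c = -1` at `z = 1`, the `AB` constraint forces
`a = -1` at `x = 1`, hence `q(-,-|1,1) = 0`, and the bipartite Hardy argument for the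
no-signalling box `q` then gives `q(+,+|0,0) = 0`.
-/

open Finset

structure IsCondDistrib {α ι : Type*} [Fintype α] (p : α → ι → ℝ) : Prop where
  nonneg : ∀ a x, 0 ≤ p a x
  sum_eq_one : ∀ x, ∑ a, p a x = 1

structure IsNoSignalling {α β ι κ : Type*} [Fintype α] [Fintype β]
    (q : α → β → ι → κ → ℝ) : Prop where
  nonneg : ∀ a b x y, 0 ≤ q a b x y
  sum_eq_one : ∀ x y, ∑ a, ∑ b, q a b x y = 1
  marginal_fst : ∀ a x y y', ∑ b, q a b x y = ∑ b, q a b x y'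
  marginal_snd : ∀ b x x' y, ∑ a, q a b x y = ∑ a, q a b x' y

def swapParties {α β ι κ : Type*} (q : α → β → ι → κ → ℝ) (b : β) (a : α) (y : κ) (x : ι) : ℝ :=
  q a b x y

theorem IsNoSignalling.swapParties {α β ι κ : Type*} [Fintype α] [Fintype β]
    {q : α → β → ι → κ → ℝ} (hq : IsNoSignalling q) : IsNoSignalling (swapParties q) where
  nonneg b a y x := hq.nonneg a b x y
  sum_eq_one y x := Finset.sum_comm.trans (hq.sum_eq_one x y)
  marginal_fst b y x x' := hq.marginal_snd b x x' y
  marginal_snd a y y' x := hq.marginal_fst a x y y'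

/-- Hardy's argument for two parties: if `c = -1` whenever `z = 1`, then `(-,-|1,1)` being
impossible forces `b = +1` at `y = 1`, and no-signalling carries this over to `z = 0`. -/
theorem IsNoSignalling.hardy_eq_zero {q : Bool → Bool → Fin 2 → Fin 2 → ℝ}
    (hq : IsNoSignalling q) (h₁₀ : q true true 1 0 = 0) (hC : ∑ b, q b true 1 1 = 0)
    (h₁₁ : q false false 1 1 = 0) : q true true 0 0 = 0 := by
  have n₁₁ := hq.sum_eq_one 1 1
  have n₁₀ := hq.sum_eq_one 1 0
  have hB := hq.marginal_fst true 1 1 0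
  have hC₀ := hq.marginal_snd true 1 0 0
  simp only [Fintype.sum_bool] at hC n₁₁ n₁₀ hB hC₀
  have := hq.nonneg
  have hB₁₁ : q true false 1 1 = 1 := by linarith [this true true 1 1, this false true 1 1]
  have hB₁₀ : q true false 1 0 = 1 := by linarith [this true true 1 1, this false true 1 1]
  have hC₁₀ : q false true 1 0 = 0 := by linarith [this false true 1 0, this false false 1 0]
  linarith [this false true 0 0, this true true 0 0]

/-- `P a b c x y z` is `p(a,b,c|x,y,z)`; the outcome `true` stands for `+1`. -/
abbrev TripartiteBox : Type := Bool → Bool → Bool → Fin 2 → Fin 2 → Fin 2 → ℝ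

namespace TripartiteBox

def prodFirst (p : Bool → Fin 2 → ℝ) (q : Bool → Bool → Fin 2 → Fin 2 → ℝ) : TripartiteBox :=
  fun a b c x y z => p a x * q b c y z

def rotate (P : TripartiteBox) : TripartiteBox :=
  fun a b c x y z => P b c a y z x

def hardyProb (P : TripartiteBox) : ℝ := P true true true 0 0 0

def HardyConstraints (P : TripartiteBox) : Prop :=
  (∀ z, ∑ c, P true true c 1 0 z = 0) ∧ (∀ x, ∑ a, P a true true x 1 0 = 0) ∧
    (∀ y, ∑ b, P true b true 0 y 1 = 0) ∧ P false false false 1 1 1 = 0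

structure NoHardyParadox (P : TripartiteBox) : Prop where
  nonneg : 0 ≤ P
  hardyProb_eq_zero : HardyConstraints P → hardyProb P = 0

variable {P Q : TripartiteBox}

theorem HardyConstraints.mono (hQ : 0 ≤ Q) (hQP : Q ≤ P) (hP : HardyConstraints P) :
    HardyConstraints Q := by
  have hsum : ∀ {ι : Type} [Fintype ι] (f g : ι → ℝ), (∀ i, 0 ≤ f i) → (∀ i, f i ≤ g i) →
      ∑ i, g i = 0 → ∑ i, f i = 0 := fun f g hf hfg hg =>
    le_antisymm (hg ▸ sum_le_sum fun i _ => hfg i) (sum_nonneg fun i _ => hf i)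
  obtain ⟨h₁, h₂, h₃, h₄⟩ := hP
  exact ⟨fun z => hsum _ _ (fun _ => hQ _ _ _ _ _ _) (fun _ => hQP _ _ _ _ _ _) (h₁ z),
    fun x => hsum _ _ (fun _ => hQ _ _ _ _ _ _) (fun _ => hQP _ _ _ _ _ _) (h₂ x),
    fun y => hsum _ _ (fun _ => hQ _ _ _ _ _ _) (fun _ => hQP _ _ _ _ _ _) (h₃ y),
    le_antisymm (h₄ ▸ hQP _ _ _ _ _ _) (hQ _ _ _ _ _ _)⟩

theorem HardyConstraints.of_smul {w : ℝ} (hw : w ≠ 0) (h : HardyConstraints (w • P)) :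
    HardyConstraints P := by
  obtain ⟨h₁, h₂, h₃, h₄⟩ := h
  simp only [Pi.smul_apply, smul_eq_mul, ← mul_sum, mul_eq_zero, hw, false_or] at h₁ h₂ h₃ h₄
  exact ⟨h₁, h₂, h₃, h₄⟩

theorem HardyConstraints.of_rotate (h : HardyConstraints (rotate P)) : HardyConstraints P :=
  ⟨h.2.1, h.2.2.1, h.1, h.2.2.2⟩

theorem NoHardyParadox.rotate (h : NoHardyParadox P) : NoHardyParadox (rotate P) :=
  ⟨fun a b c x y z => h.nonneg b c a y z x, fun hH => h.hardyProb_eq_zero hH.of_rotate⟩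

theorem NoHardyParadox.smul (h : NoHardyParadox P) {w : ℝ} (hw : 0 ≤ w) :
    NoHardyParadox (w • P) := by
  refine ⟨smul_nonneg hw h.nonneg, fun hH => ?_⟩
  rcases eq_or_ne w 0 with rfl | hw
  · simp [hardyProb]
  · exact mul_eq_zero_of_right w (h.hardyProb_eq_zero (hH.of_smul hw))

theorem NoHardyParadox.add (hP : NoHardyParadox P) (hQ : NoHardyParadox Q) :
    NoHardyParadox (P + Q) := by
  refine ⟨add_nonneg hP.nonneg hQ.nonneg, fun h => ?_⟩
  rw [show hardyProb (P + Q) = hardyProb P + hardyProb Q from rfl,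
    hP.hardyProb_eq_zero (h.mono hP.nonneg (le_add_of_nonneg_right hQ.nonneg)),
    hQ.hardyProb_eq_zero (h.mono hQ.nonneg (le_add_of_nonneg_left hP.nonneg)), add_zero]

theorem NoHardyParadox.sum {ι : Type*} {s : Finset ι} {P : ι → TripartiteBox}
    (h : ∀ i ∈ s, NoHardyParadox (P i)) : NoHardyParadox (∑ i ∈ s, P i) :=
  sum_induction P NoHardyParadox (fun _ _ => .add) ⟨le_rfl, fun _ => rfl⟩ h

theorem noHardyParadox_prodFirst {p : Bool → Fin 2 → ℝ} {q : Bool → Bool → Fin 2 → Fin 2 → ℝ}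
    (hp : IsCondDistrib p) (hq : IsNoSignalling q) : NoHardyParadox (prodFirst p q) := by
  refine ⟨fun a b c x y z => mul_nonneg (hp.nonneg a x) (hq.nonneg b c y z), ?_⟩
  rintro ⟨h₁, h₂, h₃, h₄⟩
  simp only [prodFirst, ← mul_sum, ← sum_mul, hp.sum_eq_one, one_mul] at h₁ h₂ h₃ h₄
  change p true 0 * q true true 0 0 = 0
  rcases mul_eq_zero.1 (h₃ 1) with hA₀ | hC
  · rw [hA₀, zero_mul]
  rcases mul_eq_zero.1 (h₁ 0) with hA₁ | hB
  · have hA₁' : p false 1 = 1 := by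
      have := hp.sum_eq_one 1
      rw [Fintype.sum_bool, hA₁] at this
      linarith
    rw [hq.hardy_eq_zero (h₂ 0) hC (by simpa [hA₁'] using h₄), mul_zero]
  · have := single_le_sum (fun c _ => hq.nonneg true c 0 0) (mem_univ true)
    rw [hB] at this
    rw [le_antisymm this (hq.nonneg true true 0 0), mul_zero]

end TripartiteBox

open TripartiteBox

theorem hardy_zero_bilocal_mixture_general {M : ℕ}
    (μ₁ μ₂ μ₃ : Fin M → ℝ)
    (hμ₁ : ∀ m, 0 ≤ μ₁ m) (hμ₂ : ∀ m, 0 ≤ μ₂ m) (hμ₃ : ∀ m, 0 ≤ μ₃ m)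
    -- single-party response distributions
    (pA : Fin M → Bool → Fin 2 → ℝ)
    (pB : Fin M → Bool → Fin 2 → ℝ)
    (pC : Fin M → Bool → Fin 2 → ℝ)
    (hpA : ∀ m a x, 0 ≤ pA m a x) (hpAn : ∀ m x, ∑ a, pA m a x = 1)
    (hpB : ∀ m b y, 0 ≤ pB m b y) (hpBn : ∀ m y, ∑ b, pB m b y = 1)
    (hpC : ∀ m c z, 0 ≤ pC m c z) (hpCn : ∀ m z, ∑ c, pC m c z = 1)
    -- bipartite no-signalling boxes for the complementary pairs
    (qBC : Fin M → Bool → Bool → Fin 2 → Fin 2 → ℝ)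
    (qAC : Fin M → Bool → Bool → Fin 2 → Fin 2 → ℝ)
    (qAB : Fin M → Bool → Bool → Fin 2 → Fin 2 → ℝ)
    (hqBC : ∀ m b c y z, 0 ≤ qBC m b c y z)
    (hqBCn : ∀ m y z, ∑ b, ∑ c, qBC m b c y z = 1)
    (hqBCns₁ : ∀ m b y z z', ∑ c, qBC m b c y z = ∑ c, qBC m b c y z')
    (hqBCns₂ : ∀ m c y y' z, ∑ b, qBC m b c y z = ∑ b, qBC m b c y' z)
    (hqAC : ∀ m a c x z, 0 ≤ qAC m a c x z)
    (hqACn : ∀ m x z, ∑ a, ∑ c, qAC m a c x z = 1)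
    (hqACns₁ : ∀ m a x z z', ∑ c, qAC m a c x z = ∑ c, qAC m a c x z')
    (hqACns₂ : ∀ m c x x' z, ∑ a, qAC m a c x z = ∑ a, qAC m a c x' z)
    (hqAB : ∀ m a b x y, 0 ≤ qAB m a b x y)
    (hqABn : ∀ m x y, ∑ a, ∑ b, qAB m a b x y = 1)
    (hqABns₁ : ∀ m a x y y', ∑ b, qAB m a b x y = ∑ b, qAB m a b x y')
    (hqABns₂ : ∀ m b x x' y, ∑ a, qAB m a b x y = ∑ a, qAB m a b x' y)
    -- the mixture
    (p : Bool → Bool → Bool → Fin 2 → Fin 2 → Fin 2 → ℝ)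
    (hp : ∀ a b c x y z, p a b c x y z = ∑ m,
      (μ₁ m * (pA m a x * qBC m b c y z) + μ₂ m * (pB m b y * qAC m a c x z)
        + μ₃ m * (pC m c z * qAB m a b x y)))
    -- Hardy zero constraints
    (h1 : ∀ z, ∑ c, p true true c 1 0 z = 0)
    (h2 : ∀ x, ∑ a, p a true true x 1 0 = 0)
    (h3 : ∀ y, ∑ b, p true b true 0 y 1 = 0)
    (h4 : p false false false 1 1 1 = 0) :
    p true true true 0 0 0 = 0 := by
  let Q : Fin M → TripartiteBox := fun m =>
    μ₁ m • prodFirst (pA m) (qBC m) + μ₂ m • rotate (prodFirst (pB m) (swapParties (qAC m)))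
      + μ₃ m • rotate (rotate (prodFirst (pC m) (qAB m)))
  have hpQ : p = ∑ m, Q m := by
    funext a b c x y z
    simp only [hp, Finset.sum_apply]
    rfl
  have hQ : ∀ m ∈ univ, NoHardyParadox (Q m) := by
    intro m _
    have hBC : IsNoSignalling (qBC m) := ⟨hqBC m, hqBCn m, hqBCns₁ m, hqBCns₂ m⟩
    have hAC : IsNoSignalling (qAC m) := ⟨hqAC m, hqACn m, hqACns₁ m, hqACns₂ m⟩
    have hAB : IsNoSignalling (qAB m) := ⟨hqAB m, hqABn m, hqABns₁ m, hqABns₂ m⟩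
    exact (((noHardyParadox_prodFirst ⟨hpA m, hpAn m⟩ hBC).smul (hμ₁ m)).add
      ((noHardyParadox_prodFirst ⟨hpB m, hpBn m⟩ hAC.swapParties).rotate.smul (hμ₂ m))).add
      ((noHardyParadox_prodFirst ⟨hpC m, hpCn m⟩ hAB).rotate.rotate.smul (hμ₃ m))
  have hH : HardyConstraints p := ⟨h1, h2, h3, h4⟩
  rw [hpQ] at hH ⊢
  exact (NoHardyParadox.sum hQ).hardyProb_eq_zero hH

/-- A strictly positive Hardy probability is incompatible with any convex mixture
of one-versus-two bipartitioned no-signalling models: if such a mixture satisfies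
the four Hardy zero constraints, its Hardy probability vanishes. -/
theorem hardy_zero_bilocal_mixture {M : ℕ}
    (μ₁ μ₂ μ₃ : Fin M → ℝ)
    (hμ₁ : ∀ m, 0 ≤ μ₁ m) (hμ₂ : ∀ m, 0 ≤ μ₂ m) (hμ₃ : ∀ m, 0 ≤ μ₃ m)
    (hμsum : ∑ m, (μ₁ m + μ₂ m + μ₃ m) = 1)
    -- single-party response distributions
    (pA : Fin M → Bool → Fin 2 → ℝ)
    (pB : Fin M → Bool → Fin 2 → ℝ)
    (pC : Fin M → Bool → Fin 2 → ℝ)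
    (hpA : ∀ m a x, 0 ≤ pA m a x) (hpAn : ∀ m x, ∑ a, pA m a x = 1)
    (hpB : ∀ m b y, 0 ≤ pB m b y) (hpBn : ∀ m y, ∑ b, pB m b y = 1)
    (hpC : ∀ m c z, 0 ≤ pC m c z) (hpCn : ∀ m z, ∑ c, pC m c z = 1)
    -- bipartite no-signalling boxes for the complementary pairs
    (qBC : Fin M → Bool → Bool → Fin 2 → Fin 2 → ℝ)
    (qAC : Fin M → Bool → Bool → Fin 2 → Fin 2 → ℝ)
    (qAB : Fin M → Bool → Bool → Fin 2 → Fin 2 → ℝ)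
    (hqBC : ∀ m b c y z, 0 ≤ qBC m b c y z)
    (hqBCn : ∀ m y z, ∑ b, ∑ c, qBC m b c y z = 1)
    (hqBCns₁ : ∀ m b y z z', ∑ c, qBC m b c y z = ∑ c, qBC m b c y z')
    (hqBCns₂ : ∀ m c y y' z, ∑ b, qBC m b c y z = ∑ b, qBC m b c y' z)
    (hqAC : ∀ m a c x z, 0 ≤ qAC m a c x z)
    (hqACn : ∀ m x z, ∑ a, ∑ c, qAC m a c x z = 1)
    (hqACns₁ : ∀ m a x z z', ∑ c, qAC m a c x z = ∑ c, qAC m a c x z')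
    (hqACns₂ : ∀ m c x x' z, ∑ a, qAC m a c x z = ∑ a, qAC m a c x' z)
    (hqAB : ∀ m a b x y, 0 ≤ qAB m a b x y)
    (hqABn : ∀ m x y, ∑ a, ∑ b, qAB m a b x y = 1)
    (hqABns₁ : ∀ m a x y y', ∑ b, qAB m a b x y = ∑ b, qAB m a b x y')
    (hqABns₂ : ∀ m b x x' y, ∑ a, qAB m a b x y = ∑ a, qAB m a b x' y)
    -- the mixture
    (p : Bool → Bool → Bool → Fin 2 → Fin 2 → Fin 2 → ℝ)
    (hp : ∀ a b c x y z, p a b c x y z = ∑ m,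
      (μ₁ m * (pA m a x * qBC m b c y z) + μ₂ m * (pB m b y * qAC m a c x z)
        + μ₃ m * (pC m c z * qAB m a b x y)))
    -- Hardy zero constraints
    (h1 : ∀ z, ∑ c, p true true c 1 0 z = 0)
    (h2 : ∀ x, ∑ a, p a true true x 1 0 = 0)
    (h3 : ∀ y, ∑ b, p true b true 0 y 1 = 0)
    (h4 : p false false false 1 1 1 = 0) :
    p true true true 0 0 0 = 0 :=
  hardy_zero_bilocal_mixture_general μ₁ μ₂ μ₃ hμ₁ hμ₂ hμ₃ pA pB pC hpA hpAn hpB hpBn hpC hpCn qBC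
    qAC qAB hqBC hqBCn hqBCns₁ hqBCns₂ hqAC hqACn hqACns₁ hqACns₂ hqAB hqABn hqABns₁ hqABns₂ p hp h1
    h2 h3 h4
end
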